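/- There exists a unique continuous K-linear map d : K{{x}} → K{{x,y} (with respect to the x-adic topologies) such that d(x) = y and d(•_m(f_1,…,f_m)) = Σ_{i=1}^m •_m(f_1,…,f_{i−1}, d(f_i), f_{i+1},…,f_m) for all m ≥ 2 and all f_1,…,f_m ∈ K{{x}}. This d is called the universal derivation on K{{x}}, and d(f) = df is the differential of f; in particular y = dx. -/

import Mathlib

namespace Planar

inductive PVar : Type
  | vx : PVar
  | vy : PVar
deriving DecidableEq

/-- A finite planar reduced rooted tree: every internal vertex has at least two
(ordered) children, encoded as `node t₁ t₂ rest` with children list `t₁ :: t₂ :: rest`;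
leaves are labeled by a variable (an isomorphism class of such a labeled tree is
faithfully represented by this inductive data). -/
inductive PTree : Type
  | leaf : PVar → PTree
  | node : PTree → PTree → List PTree → PTree

namespace PTree

/-- The number of leaves carrying the label `v`. -/
def countLeaf (v : PVar) : PTree → ℕ
  | .leaf w => if w = v then 1 else 0
  | .node t1 t2 rest =>
      countLeaf v t1 + countLeaf v t2 + (rest.attach.map fun t => countLeaf v t.1).sum
decreasing_by
  all_goals simp_wf
  · omega
  · omega
  · have := List.sizeOf_lt_of_mem t.2
    omega

end PTree

/-- `P'(x,y)`: planar monomials plus the empty tree `1_P` (= `none`). -/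
abbrev PT := Option PTree

/-- `deg_x`: the number of leaves labeled `x`. -/
def degx (S : PT) : ℕ := S.elim 0 (PTree.countLeaf .vx)

/-- `deg_y`: the number of leaves labeled `y`. -/
def degy (S : PT) : ℕ := S.elim 0 (PTree.countLeaf .vy)

/-- `m`-ary grafting `•_m` on `P'(x,y)` (`m = l.length`): join the non-trivial entries
at a new root; the conventions `•_m(1_P,…,1_P) = 1_P`, dropping of `1_P`-entries and
`•_2(S,1_P) = •_2(1_P,S) = S` amount to discarding the `1_P`-entries first. -/
def graft (l : List PT) : PT :=
  match l.reduceOption with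
  | [] => none
  | [t] => some t
  | t1 :: t2 :: ts => some (.node t1 t2 ts)

variable (K : Type) [Field K]

/-- The algebra `K{{x,y}` of planar power series in `x` and polynomials in `y`:
functions on `P'(x,y)` such that for every `n` only finitely many monomials of
`x`-degree `n` have a nonzero coefficient. -/
def PSer : Type := {f : PT → K // ∀ n : ℕ, {S : PT | f S ≠ 0 ∧ degx S = n}.Finite}

variable {K}

namespace PSer

private lemma finite_add (f g : PSer K) (n : ℕ) :
    {S : PT | f.1 S + g.1 S ≠ 0 ∧ degx S = n}.Finite := by
  apply ((f.2 n).union (g.2 n)).subset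
  rintro S ⟨hne, hdeg⟩
  by_cases h1 : f.1 S = 0
  · exact Or.inr ⟨by simpa [h1] using hne, hdeg⟩
  · exact Or.inl ⟨h1, hdeg⟩

private lemma finite_neg (f : PSer K) (n : ℕ) :
    {S : PT | -f.1 S ≠ 0 ∧ degx S = n}.Finite := by
  apply (f.2 n).subset
  rintro S ⟨hne, hdeg⟩
  exact ⟨by simpa using hne, hdeg⟩

private lemma finite_zero (n : ℕ) :
    {S : PT | (0 : K) ≠ 0 ∧ degx S = n}.Finite := by
  convert Set.finite_empty using 1
  ext S; simp

private lemma finite_smul (a : K) (f : PSer K) (n : ℕ) :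
    {S : PT | a * f.1 S ≠ 0 ∧ degx S = n}.Finite := by
  apply (f.2 n).subset
  rintro S ⟨hne, hdeg⟩
  exact ⟨fun h => hne (by simp [h]), hdeg⟩

noncomputable instance : AddCommGroup (PSer K) where
  add f g := ⟨fun S => f.1 S + g.1 S, finite_add f g⟩
  zero := ⟨fun _ => 0, finite_zero⟩
  neg f := ⟨fun S => -f.1 S, finite_neg f⟩
  add_assoc f g h := Subtype.ext (funext fun S => add_assoc _ _ _)
  add_comm f g := Subtype.ext (funext fun S => add_comm _ _)
  zero_add f := Subtype.ext (funext fun S => zero_add _)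
  add_zero f := Subtype.ext (funext fun S => add_zero _)
  neg_add_cancel f := Subtype.ext (funext fun S => neg_add_cancel _)
  nsmul n f := ⟨fun S => (n : K) * f.1 S, finite_smul _ f⟩
  nsmul_zero f := Subtype.ext (funext fun S => by
    show ((0 : ℕ) : K) * f.1 S = (0 : K); simp)
  nsmul_succ n f := Subtype.ext (funext fun S => by
    show ((n + 1 : ℕ) : K) * f.1 S = (n : K) * f.1 S + f.1 S; push_cast; ring)
  zsmul n f := ⟨fun S => (n : K) * f.1 S, finite_smul _ f⟩
  zsmul_zero' f := Subtype.ext (funext fun S => by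
    show ((0 : ℤ) : K) * f.1 S = (0 : K); simp)
  zsmul_succ' n f := Subtype.ext (funext fun S => by
    show ((Int.ofNat n.succ : ℤ) : K) * f.1 S = ((Int.ofNat n : ℤ) : K) * f.1 S + f.1 S
    simp only [Int.ofNat_eq_coe]; push_cast; ring)
  zsmul_neg' n f := Subtype.ext (funext fun S => by
    show ((Int.negSucc n : ℤ) : K) * f.1 S = -(((n.succ : ℤ) : K) * f.1 S)
    simp [Int.negSucc_eq]; push_cast; ring)

noncomputable instance : Module K (PSer K) where
  smul a f := ⟨fun S => a * f.1 S, finite_smul a f⟩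
  one_smul f := Subtype.ext (funext fun S => one_mul _)
  mul_smul a b f := Subtype.ext (funext fun S => mul_assoc _ _ _)
  smul_zero a := Subtype.ext (funext fun S => mul_zero _)
  smul_add a f g := Subtype.ext (funext fun S => mul_add _ _ _)
  add_smul a b f := Subtype.ext (funext fun S => add_mul _ _ _)
  zero_smul f := Subtype.ext (funext fun S => zero_mul _)

@[simp] lemma add_coeff (f g : PSer K) (S : PT) : (f + g).1 S = f.1 S + g.1 S := rfl
@[simp] lemma smul_coeff (a : K) (f : PSer K) (S : PT) : (a • f).1 S = a * f.1 S := rfl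
@[simp] lemma zero_coeff (S : PT) : (0 : PSer K).1 S = 0 := rfl

end PSer

/-- The indicator series of a single planar monomial `S ∈ P'(x,y)`. -/
noncomputable def mono (S : PT) : PSer K := by
  classical
  refine ⟨fun T => if T = S then 1 else 0, fun n => (Set.finite_singleton S).subset ?_⟩
  rintro T ⟨h1, -⟩
  by_contra hc
  exact h1 (if_neg (by simpa [Set.mem_singleton_iff] using hc))

/-- The unit series `1_P` (the empty tree). -/
noncomputable def onePS : PSer K := mono none

/-- The series `x` (the one-vertex tree labeled `x`). -/
noncomputable def Xps : PSer K := mono (some (.leaf .vx))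

/-- The series `y = dx` (the one-vertex tree labeled `y`). -/
noncomputable def Yps : PSer K := mono (some (.leaf .vy))

/-- Coefficient of the product `•_m(f₁,…,f_m)` at `S`: the (finite) sum of
`c_{S₁}(f₁)⋯c_{S_m}(f_m)` over all decompositions `S = •_m(S₁,…,S_m)`. -/
noncomputable def bulletCoeff (fs : List (PSer K)) (S : PT) : K :=
  ∑ᶠ t ∈ {t : List PT | t.length = fs.length ∧ graft t = S},
    (List.zipWith (fun f u => f.1 u) fs t).prod

open Classical in
/-- The `m`-ary product `•_m(f₁,…,f_m)` on `K{{x,y}` (`m = fs.length`). -/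
noncomputable def bullet (fs : List (PSer K)) : PSer K :=
  if h : ∀ n : ℕ, {S : PT | bulletCoeff fs S ≠ 0 ∧ degx S = n}.Finite
  then ⟨bulletCoeff fs, h⟩ else 0

/-- The `x`-order `ord_x(f) ∈ ℕ ∪ {∞}`: the least `x`-degree of a monomial with
nonzero coefficient (`∞` for `f = 0`). -/
noncomputable def ordx (f : PSer K) : ℕ∞ :=
  ⨅ S ∈ {S : PT | f.1 S ≠ 0}, (degx S : ℕ∞)

/-- The `x`-adic absolute value `|f|ₓ = (1/2)^{ord_x f}` (`= 0` for `f = 0`). -/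
noncomputable def normx (f : PSer K) : ℝ :=
  if ordx f = ⊤ then 0 else (2⁻¹ : ℝ) ^ (ordx f).toNat

/-- The `x`-adic distance `|f - g|ₓ`. -/
noncomputable def distx (f g : PSer K) : ℝ := normx (f - g)

/-- A Cauchy sequence for the `x`-adic distance. -/
def IsCauchySeq (u : ℕ → PSer K) : Prop :=
  ∀ ε : ℝ, 0 < ε → ∃ N : ℕ, ∀ p q : ℕ, N ≤ p → N ≤ q → distx (u p) (u q) < ε

/-- Convergence of a sequence to `f` for the `x`-adic distance. -/
def TendstoSeq (u : ℕ → PSer K) (f : PSer K) : Prop :=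
  ∀ ε : ℝ, 0 < ε → ∃ N : ℕ, ∀ p : ℕ, N ≤ p → distx (u p) f < ε

/-- Continuity of a map between two spaces equipped with distance functions. -/
def ContWrt {α β : Type*} (dα : α → α → ℝ) (dβ : β → β → ℝ) (φ : α → β) : Prop :=
  ∀ a : α, ∀ ε : ℝ, 0 < ε → ∃ δ : ℝ, 0 < δ ∧ ∀ b : α, dα b a < δ → dβ (φ b) (φ a) < ε

/-- The property of being supported on monomials all of whose leaves are labeled `x`. -/
def OnlyX (f : PSer K) : Prop := ∀ S : PT, f.1 S ≠ 0 → degy S = 0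

variable (K) in
/-- `K{{x}}`, the closed unital subalgebra of `K{{x,y}` generated by `x`, as a
submodule: the series supported on `1_P` and trees all of whose leaves are labeled `x`. -/
noncomputable def kxSub : Submodule K (PSer K) where
  carrier := {f | OnlyX f}
  add_mem' := by
    intro f g hf hg S hS
    by_cases h1 : f.1 S = 0
    · exact hg S (by simpa [h1] using hS)
    · exact hf S h1
  zero_mem' := by intro S hS; simp at hS
  smul_mem' := by
    intro a f hf S hS
    exact hf S (fun h => hS (by simp [h]))

variable (K) in
/-- The space `K{{x}}` of planar power series in `x`. -/
abbrev Kx : Type _ := ↥(kxSub K)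

@[simp] lemma mem_kxSub {f : PSer K} : f ∈ kxSub K ↔ OnlyX f := Iff.rfl

/-- The `x`-adic distance on `K{{x}}`. -/
noncomputable def distKx (f g : Kx K) : ℝ := distx f.1 g.1

lemma onePS_mem_kxSub : onePS ∈ kxSub (K := K) := by
  intro S hS
  by_cases h : S = none
  · subst h; rfl
  · exact absurd (if_neg h) hS

lemma Xps_mem_kxSub : Xps ∈ kxSub (K := K) := by
  intro S hS
  by_cases h : S = some (.leaf .vx)
  · subst h; simp [degy, PTree.countLeaf]
  · exact absurd (if_neg h) hS

/-- `1_P` as an element of `K{{x}}`. -/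
noncomputable def oneX : Kx K := ⟨onePS, onePS_mem_kxSub⟩

/-- `x` as an element of `K{{x}}`. -/
noncomputable def xX : Kx K := ⟨Xps, Xps_mem_kxSub⟩

open Classical in
/-- The `m`-ary product `•_m` on `K{{x}}` (`m = fs.length`). -/
noncomputable def bulletX (fs : List (Kx K)) : Kx K :=
  if h : bullet (fs.map (fun f => f.1)) ∈ kxSub K
  then ⟨bullet (fs.map (fun f => f.1)), h⟩ else 0

open Classical in
/-- The homogeneous component of degree `n` (w.r.t. `deg_x`) of a planar power series. -/
noncomputable def comp (f : PSer K) (n : ℕ) : PSer K :=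
  ⟨fun S => if degx S = n then f.1 S else 0, by
    intro m
    apply (f.2 m).subset
    rintro S ⟨h1, h2⟩
    refine ⟨?_, h2⟩
    by_cases hd : degx S = n
    · simpa [hd] using h1
    · simp [hd] at h1⟩

/-- The homogeneous component of degree `n` of an element of `K{{x}}`. -/
noncomputable def compX (f : Kx K) (n : ℕ) : Kx K :=
  ⟨comp f.1 n, by
    intro S hS
    apply (mem_kxSub.mp f.2) S
    simp only [comp] at hS
    by_cases hd : degx S = n
    · simpa [hd] using hS
    · simp [hd] at hS⟩

/-- A substitution homomorphism `φ_{(g,h)} : K{{x,y} → K{{x,y}`: `K`-linear, compatible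
with all grafting operations `•_m` (`m ≥ 2`), unital, `x ↦ g`, `y ↦ h`, and continuous
for the `x`-adic topology. -/
structure IsSubstHom (g h : PSer K) (φ : PSer K → PSer K) : Prop where
  linear : IsLinearMap K φ
  map_graft : ∀ fs : List (PSer K), 2 ≤ fs.length → φ (bullet fs) = bullet (fs.map φ)
  map_one : φ onePS = onePS
  map_X : φ Xps = g
  map_Y : φ Yps = h
  cont : ContWrt distx distx φ

/-- A substitution homomorphism `φ_g : K{{x}} → K{{x}}` with `x ↦ g`. -/
structure IsSubstHomX (g : Kx K) (φ : Kx K → Kx K) : Prop where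
  linear : IsLinearMap K φ
  map_graft : ∀ fs : List (Kx K), 2 ≤ fs.length → φ (bulletX fs) = bulletX (fs.map φ)
  map_one : φ oneX = oneX
  map_X : φ xX = g
  cont : ContWrt distKx distKx φ

/-- The universal derivation `d : K{{x}} → K{{x,y}`: continuous, `K`-linear, `d x = y`,
and satisfying the Leibniz rule for every grafting operation `•_m` (`m ≥ 2`). -/
structure IsUDeriv (d : Kx K → PSer K) : Prop where
  linear : IsLinearMap K d
  cont : ContWrt distKx distx d
  map_X : d xX = Yps
  leibniz : ∀ fs : List (Kx K), 2 ≤ fs.length →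
    d (bulletX fs) = ∑ i : Fin fs.length,
      bullet ((fs.map (fun f => f.1)).set i.1 (d (fs.get i)))

/-- The `k`-ary planar exponential series `Exp_k(x)`: constant coefficient `1`,
coefficient `1` at `x`, and `Exp_k(kx) = •_k(Exp_k(x),…,Exp_k(x))`. -/
structure IsExp (k : ℕ) (f : Kx K) : Prop where
  coeff_one : f.1.1 none = 1
  coeff_X : f.1.1 (some (.leaf .vx)) = 1
  funEq : ∀ φ : Kx K → Kx K, IsSubstHomX ((k : K) • xX) φ →
    φ f = bulletX (List.replicate k f)

/-- `ℓ = Log_k(1+x)`, the planar logarithm attached to a planar exponential series `e`: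
`ord_x ℓ ≥ 1` and `ℓ(e - 1) = x`. -/
structure IsLogOf (e ℓ : Kx K) : Prop where
  ord : 1 ≤ ordx ℓ.1
  eq : ∀ φ : Kx K → Kx K, IsSubstHomX (e - oneX) φ → φ ℓ = xX

end Planar

/-!
The derivation is explicit: `d f` is supported on the trees with exactly one `y`-leaf, and its
coefficient at such a tree `T` is the coefficient of `f` at the tree obtained from `T` by
relabelling that leaf `x`. In other words `d` replaces the `x`-leaves of a monomial, one at a
time, by `y`. In a decomposition `T = •ₘ(T₁, …, Tₘ)` the `y`-leaf of `T` lies in exactly one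
`Tᵢ`, and relabelling leaves is a bijection between the decompositions of `T` and those of its
relabelling; together these give the Leibniz rule coefficientwise. Since `d` lowers the
`x`-order by at most one, it is continuous.

Two such derivations agree on `1 = •₂(1, 1)` (both vanish there) and on `x`, hence, by the
Leibniz rule, on every monomial `•ₘ(S₁, …, Sₘ)`. By linearity they agree on the truncations of
any `f ∈ K{{x}}`, which converge to `f`, and by continuity on `f` itself.
-/

namespace Planar

open PSer

variable {K : Type} [Field K]

lemma finite_lists_length_le {α : Type*} {F : Set α} (hF : F.Finite) (m : ℕ) :
    {l : List α | l.length ≤ m ∧ ∀ a ∈ l, a ∈ F}.Finite := by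
  have := hF.to_subtype
  refine ((List.finite_length_le F m).image (List.map Subtype.val)).subset ?_
  rintro l ⟨hlen, hmem⟩
  exact ⟨l.attach.map fun a => ⟨a.1, hmem a.1 a.2⟩, by simpa using hlen, by simp⟩

namespace PTree

@[simp] lemma countLeaf_leaf (v w : PVar) :
    countLeaf v (.leaf w) = if w = v then 1 else 0 := by
  rw [countLeaf]

@[simp] lemma countLeaf_node (v : PVar) (t₁ t₂ : PTree) (ts : List PTree) :
    countLeaf v (.node t₁ t₂ ts) =
      countLeaf v t₁ + countLeaf v t₂ + (ts.map (countLeaf v)).sum := by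
  rw [countLeaf]
  simp

@[elab_as_elim]
protected lemma induction {P : PTree → Prop} (leaf : ∀ v, P (.leaf v))
    (node : ∀ t₁ t₂ ts, P t₁ → P t₂ → (∀ t ∈ ts, P t) → P (.node t₁ t₂ ts)) : ∀ t, P t
  | .leaf v => leaf v
  | .node t₁ t₂ ts =>
      node t₁ t₂ ts (PTree.induction leaf node t₁) (PTree.induction leaf node t₂)
        fun t _ => PTree.induction leaf node t

lemma one_le_countLeaf_add (t : PTree) : 1 ≤ countLeaf .vx t + countLeaf .vy t := by
  induction t using PTree.induction with
  | leaf v => cases v <;> simp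
  | node t₁ t₂ ts h₁ h₂ _ => simp only [countLeaf_node]; omega

lemma finite_setOf_countLeaf_add_le (m : ℕ) :
    {t : PTree | countLeaf .vx t + countLeaf .vy t ≤ m}.Finite := by
  induction m with
  | zero =>
    refine Set.finite_empty.subset fun t (ht : countLeaf .vx t + countLeaf .vy t ≤ 0) => ?_
    have := one_le_countLeaf_add t
    omega
  | succ m ih =>
    have hlists := finite_lists_length_le ih (m + 1)
    refine (((Set.finite_singleton (leaf .vy)).insert (leaf .vx)).union
      ((ih.prod (ih.prod hlists)).image fun p => node p.1 p.2.1 p.2.2)).subset ?_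
    rintro (v | ⟨t₁, t₂, ts⟩) ht
    · left; cases v <;> simp
    · right
      have h₁ := one_le_countLeaf_add t₁
      have h₂ := one_le_countLeaf_add t₂
      have hts : ∀ t ∈ ts, countLeaf .vx t + countLeaf .vy t ≤ (ts.map (countLeaf .vx)).sum +
          (ts.map (countLeaf .vy)).sum := fun t ht =>
        Nat.add_le_add (List.le_sum_of_mem (List.mem_map_of_mem ht))
          (List.le_sum_of_mem (List.mem_map_of_mem ht))
      have hlen := List.length_le_sum_of_one_le
        (ts.map fun t => countLeaf .vx t + countLeaf .vy t)
        (by simpa using fun t _ => one_le_countLeaf_add t)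
      rw [List.length_map, List.sum_map_add] at hlen
      simp only [Set.mem_ofPred_eq, countLeaf_node] at ht
      refine ⟨⟨t₁, t₂, ts⟩, ⟨?_, ?_, ?_, fun t ht' => ?_⟩, rfl⟩ <;>
        simp only [Set.mem_ofPred_eq] <;> grind

def relabel (σ : PVar → PVar) : PTree → PTree
  | .leaf v => .leaf (σ v)
  | .node t₁ t₂ ts => .node (relabel σ t₁) (relabel σ t₂) (ts.map (relabel σ))

lemma countLeaf_vx_relabel_vx (t : PTree) :
    countLeaf .vx (relabel (fun _ => .vx) t) = countLeaf .vx t + countLeaf .vy t := by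
  induction t using PTree.induction with
  | leaf v => cases v <;> simp [relabel]
  | node t₁ t₂ ts h₁ h₂ hts =>
    simp only [relabel, countLeaf_node, h₁, h₂, List.map_map, Function.comp_def]
    rw [List.map_congr_left hts, List.sum_map_add]
    omega

lemma relabel_vx_of_countLeaf_vy_eq_zero {t : PTree} (h : countLeaf .vy t = 0) :
    relabel (fun _ => .vx) t = t := by
  induction t using PTree.induction with
  | leaf v => cases v <;> simp_all [relabel]
  | node t₁ t₂ ts h₁ h₂ hts =>
    simp only [countLeaf_node, Nat.add_eq_zero_iff, List.sum_eq_zero_iff, List.mem_map] at h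
    simp only [relabel, h₁ h.1.1, h₂ h.1.2, node.injEq, true_and]
    exact (List.map_congr_left fun t ht => hts t ht (h.2 _ ⟨t, ht, rfl⟩)).trans (List.map_id ts)

end PTree

open PTree

lemma eq_of_reduceOption_eq_of_map_eq {α β : Type*} {f : α → β} :
    ∀ {u u' : List (Option α)}, u.reduceOption = u'.reduceOption →
      u.map (Option.map f) = u'.map (Option.map f) → u = u'
  | [], u', _, h => (List.map_eq_nil_iff.1 h.symm).symm
  | _ :: _, [], _, h => by simp at h
  | none :: u, none :: u', h₁, h₂ => by
    simp only [List.reduceOption_cons_of_none, List.map_cons, List.cons.injEq] at h₁ h₂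
    rw [eq_of_reduceOption_eq_of_map_eq h₁ h₂.2]
  | some a :: u, some a' :: u', h₁, h₂ => by
    simp only [List.reduceOption_cons_of_some, List.map_cons, List.cons.injEq] at h₁ h₂
    rw [h₁.1, eq_of_reduceOption_eq_of_map_eq h₁.2 h₂.2]
  | none :: _, some _ :: _, _, h => by simp at h
  | some _ :: _, none :: _, _, h => by simp at h

lemma exists_map_eq_of_reduceOption_eq_map {α β : Type*} {f : α → β} :
    ∀ {v : List (Option β)} {L : List α}, v.reduceOption = L.map f →
      ∃ u : List (Option α), u.map (Option.map f) = v ∧ u.reduceOption = L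
  | [], L, h => ⟨[], rfl, by simpa [eq_comm] using h⟩
  | none :: v, L, h => by
    obtain ⟨u, hu, hL⟩ := exists_map_eq_of_reduceOption_eq_map (v := v) (by simpa using h)
    exact ⟨none :: u, by simp [hu], by simpa using hL⟩
  | some b :: v, [], h => by simp at h
  | some b :: v, a :: L, h => by
    simp only [List.reduceOption_cons_of_some, List.map_cons, List.cons.injEq] at h
    obtain ⟨u, hu, hL⟩ := exists_map_eq_of_reduceOption_eq_map h.2
    exact ⟨some a :: u, by simp [hu, h.1], by simp [hL]⟩

@[simp] lemma degx_some (t : PTree) : degx (some t) = countLeaf .vx t := rfl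
@[simp] lemma degy_none : degy none = 0 := rfl
@[simp] lemma degy_some (t : PTree) : degy (some t) = countLeaf .vy t := rfl

lemma finite_setOf_degx_add_degy_le (n : ℕ) : {S : PT | degx S + degy S ≤ n}.Finite := by
  refine ((finite_setOf_countLeaf_add_le n).image some).insert none |>.subset ?_
  rintro (_ | t) ht
  exacts [Set.mem_insert _ _, Set.mem_insert_of_mem _ ⟨t, ht, rfl⟩]

lemma countLeaf_graft (v : PVar) (u : List PT) :
    (graft u).elim 0 (countLeaf v) = (u.map fun S => S.elim 0 (countLeaf v)).sum := by
  have hsum : (u.map fun S => S.elim 0 (countLeaf v)).sum =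
      (u.reduceOption.map (countLeaf v)).sum := by
    induction u with
    | nil => rfl
    | cons S u ih => rcases S with _ | t <;> simp [ih]
  rw [hsum, graft]
  rcases u.reduceOption with _ | ⟨t₁, _ | ⟨t₂, ts⟩⟩ <;> simp
  omega

lemma degx_graft (u : List PT) : degx (graft u) = (u.map degx).sum := countLeaf_graft .vx u

lemma degy_graft (u : List PT) : degy (graft u) = (u.map degy).sum := countLeaf_graft .vy u

lemma reduceOption_eq_of_graft_eq {u u' : List PT} (h : graft u = graft u')
    (hlen : u.reduceOption.length = u'.reduceOption.length) :
    u.reduceOption = u'.reduceOption := by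
  unfold graft at h
  rcases hu : u.reduceOption with _ | ⟨a, _ | ⟨b, l⟩⟩ <;>
    rcases hu' : u'.reduceOption with _ | ⟨a', _ | ⟨b', l'⟩⟩ <;> simp_all

lemma reduceOption_map_some {α : Type*} (l : List α) : (l.map some).reduceOption = l := by
  induction l <;> simp [*]

lemma graft_map_some (t₁ t₂ : PTree) (ts : List PTree) :
    graft ((t₁ :: t₂ :: ts).map some) = some (.node t₁ t₂ ts) := by
  simp [graft, reduceOption_map_some]

lemma graft_map_relabel (σ : PVar → PVar) (u : List PT) :
    graft (u.map (Option.map (relabel σ))) = (graft u).map (relabel σ) := by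
  unfold graft
  rw [List.reduceOption_map]
  rcases u.reduceOption with _ | ⟨a, _ | ⟨b, l⟩⟩ <;> simp [relabel]

lemma exists_graft_eq_of_graft_eq_map_relabel (σ : PVar → PVar) {v : List PT} {T : PT}
    (h : graft v = T.map (relabel σ)) :
    ∃ u : List PT, u.map (Option.map (relabel σ)) = v ∧ graft u = T := by
  suffices ∃ L : List PTree, v.reduceOption = L.map (relabel σ) ∧
      ∀ u : List PT, u.reduceOption = L → graft u = T by
    obtain ⟨L, hL, hgraft⟩ := this
    obtain ⟨u, hu, huL⟩ := exists_map_eq_of_reduceOption_eq_map hL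
    exact ⟨u, hu, hgraft u huL⟩
  unfold graft at h ⊢
  rcases T with _ | t <;> rcases hv : v.reduceOption with _ | ⟨a, _ | ⟨b, l⟩⟩ <;>
    simp only [hv, Option.map_none, Option.map_some, reduceCtorEq, Option.some.injEq] at h
  · exact ⟨[], rfl, fun u hu => by rw [hu]⟩
  · exact ⟨[t], by rw [h]; rfl, fun u hu => by rw [hu]⟩
  · rcases t with w | ⟨t₁, t₂, ts⟩
    · simp [relabel] at h
    · simp only [relabel, node.injEq] at h
      exact ⟨t₁ :: t₂ :: ts, by rw [h.1, h.2.1, h.2.2]; rfl, fun u hu => by rw [hu]⟩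

namespace PSer

@[simp] lemma sub_coeff (f g : PSer K) (S : PT) : (f - g).1 S = f.1 S - g.1 S :=
  (sub_eq_add_neg _ _).symm

@[ext] lemma ext {f g : PSer K} (h : ∀ S, f.1 S = g.1 S) : f = g := Subtype.ext (funext h)

def lcoeff (S : PT) : PSer K →ₗ[K] K where
  toFun f := f.1 S
  map_add' _ _ := rfl
  map_smul' _ _ := rfl

lemma sum_coeff {ι : Type*} (s : Finset ι) (F : ι → PSer K) (S : PT) :
    (∑ i ∈ s, F i).1 S = ∑ i ∈ s, (F i).1 S :=
  map_sum (lcoeff S) F s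

end PSer

open PSer

def orderGE (n : ℕ) : Submodule K (PSer K) where
  carrier := {f | ∀ S, f.1 S ≠ 0 → n ≤ degx S}
  add_mem' {f g} hf hg S hS := by
    by_cases h : f.1 S = 0
    · exact hg S (by simpa [h] using hS)
    · exact hf S h
  zero_mem' _ hS := absurd rfl hS
  smul_mem' _ _ hf S hS := hf S (right_ne_zero_of_mul hS)

lemma mem_orderGE {n : ℕ} {f : PSer K} : f ∈ orderGE n ↔ ∀ S, f.1 S ≠ 0 → n ≤ degx S :=
  Iff.rfl

lemma mem_orderGE_iff_le_ordx {n : ℕ} {f : PSer K} : f ∈ orderGE n ↔ (n : ℕ∞) ≤ ordx f := by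
  simp only [mem_orderGE, ordx, le_iInf₂_iff, Set.mem_ofPred_eq, Nat.cast_le]

lemma normx_le_pow_iff {n : ℕ} {f : PSer K} : normx f ≤ (2⁻¹ : ℝ) ^ n ↔ f ∈ orderGE n := by
  rw [mem_orderGE_iff_le_ordx, normx]
  split_ifs with h
  · simp [h]
  · lift ordx f to ℕ using h with k
    rw [ENat.toNat_natCast, Nat.cast_le,
      pow_le_pow_iff_right_of_lt_one₀ (by norm_num) (by norm_num)]

lemma orderGE_antitone : Antitone (orderGE (K := K)) :=
  fun _ _ hmn _ hf S hS => hmn.trans (hf S hS)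

lemma eq_zero_of_forall_mem_orderGE {f : PSer K} (h : ∀ n, f ∈ orderGE n) : f = 0 := by
  ext S
  by_contra hS
  have := h (degx S + 1) S hS
  omega

lemma contWrt_of_forall_exists_orderGE (φ : Kx K →ₗ[K] PSer K)
    (h : ∀ n, ∃ k, ∀ f : Kx K, f.1 ∈ orderGE k → φ f ∈ orderGE n) :
    ContWrt distKx distx φ := by
  intro f ε hε
  obtain ⟨n, hn⟩ := exists_pow_lt_of_lt_one hε (by norm_num : (2⁻¹ : ℝ) < 1)
  obtain ⟨k, hk⟩ := h n
  refine ⟨(2⁻¹ : ℝ) ^ k, by positivity, fun g hg => ?_⟩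
  have hgf : (g - f).1 ∈ orderGE k := normx_le_pow_iff.1 hg.le
  calc distx (φ g) (φ f) = normx (φ (g - f)) := by rw [map_sub]; rfl
    _ ≤ (2⁻¹ : ℝ) ^ n := normx_le_pow_iff.2 (hk _ hgf)
    _ < ε := hn

lemma ContWrt.exists_orderGE {φ : Kx K → PSer K} (hφ : ContWrt distKx distx φ) (f : Kx K)
    (n : ℕ) : ∃ k, ∀ g : Kx K, (g - f).1 ∈ orderGE k → φ g - φ f ∈ orderGE n := by
  obtain ⟨δ, hδ, hφδ⟩ := hφ f _ (pow_pos (by norm_num : (0 : ℝ) < 2⁻¹) n)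
  obtain ⟨k, hk⟩ := exists_pow_lt_of_lt_one hδ (by norm_num : (2⁻¹ : ℝ) < 1)
  exact ⟨k, fun g hg => normx_le_pow_iff.1 (hφδ g ((normx_le_pow_iff.2 hg).trans_lt hk)).le⟩

open Classical in
lemma mono_coeff (S T : PT) : (mono (K := K) S).1 T = if T = S then 1 else 0 := rfl

lemma eq_sum_mono (f : PSer K) (hf : {S : PT | f.1 S ≠ 0}.Finite) :
    f = ∑ S ∈ hf.toFinset, f.1 S • mono S := by
  classical
  ext T
  simp only [sum_coeff, smul_coeff, mono_coeff, mul_ite, mul_one, mul_zero,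
    Finset.sum_ite_eq, Set.Finite.mem_toFinset, Set.mem_ofPred_eq]
  split_ifs with h
  exacts [rfl, not_not.1 h]

lemma finite_decomps (m : ℕ) (S : PT) : {u : List PT | u.length = m ∧ graft u = S}.Finite := by
  refine (finite_lists_length_le (finite_setOf_degx_add_degy_le (degx S + degy S)) m).subset ?_
  rintro u ⟨hlen, rfl⟩
  refine ⟨hlen.le, fun a ha => ?_⟩
  have hx := List.le_sum_of_mem (List.mem_map_of_mem (f := degx) ha)
  have hy := List.le_sum_of_mem (List.mem_map_of_mem (f := degy) ha)
  simp only [Set.mem_ofPred_eq, degx_graft, degy_graft]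
  omega

noncomputable def decomps (m : ℕ) (S : PT) : Finset (List PT) := (finite_decomps m S).toFinset

lemma mem_decomps {m : ℕ} {S : PT} {u : List PT} :
    u ∈ decomps m S ↔ u.length = m ∧ graft u = S :=
  Set.Finite.mem_toFinset _

lemma bulletCoeff_eq_sum (fs : List (PSer K)) (S : PT) :
    bulletCoeff fs S =
      ∑ u ∈ decomps fs.length S, (List.zipWith (fun f T => f.1 T) fs u).prod := by
  rw [bulletCoeff, ← finsum_mem_coe_finset, decomps, Set.Finite.coe_toFinset]

lemma exists_decomp_of_bulletCoeff_ne_zero {fs : List (PSer K)} {S : PT}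
    (h : bulletCoeff fs S ≠ 0) : ∃ u ∈ decomps fs.length S, ∀ a ∈ u, ∃ f ∈ fs, f.1 a ≠ 0 := by
  rw [bulletCoeff_eq_sum] at h
  obtain ⟨u, hu, hprod⟩ := Finset.exists_ne_zero_of_sum_ne_zero h
  refine ⟨u, hu, fun a ha => ?_⟩
  obtain ⟨j, hj, rfl⟩ := List.mem_iff_getElem.1 ha
  have hjfs : j < fs.length := (mem_decomps.1 hu).1 ▸ hj
  refine ⟨fs[j], List.getElem_mem hjfs, fun h0 => hprod (List.prod_eq_zero ?_)⟩
  exact List.mem_iff_getElem.2 ⟨j, by simp [hj, hjfs], by simpa using h0⟩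

lemma finite_support_bulletCoeff (fs : List (PSer K)) (n : ℕ) :
    {S : PT | bulletCoeff fs S ≠ 0 ∧ degx S = n}.Finite := by
  let F : Set PT :=
    ⋃ f ∈ {f | f ∈ fs}, ⋃ j ∈ Finset.range (n + 1), {T | f.1 T ≠ 0 ∧ degx T = j}
  have hF : F.Finite :=
    fs.finite_toSet.biUnion fun f _ => (Finset.finite_toSet _).biUnion fun j _ => f.2 j
  refine ((finite_lists_length_le hF fs.length).image graft).subset ?_
  rintro S ⟨hS, rfl⟩
  obtain ⟨u, hu, hsupp⟩ := exists_decomp_of_bulletCoeff_ne_zero hS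
  obtain ⟨hlen, rfl⟩ := mem_decomps.1 hu
  refine ⟨u, ⟨hlen.le, fun a ha => ?_⟩, rfl⟩
  obtain ⟨f, hf, hfa⟩ := hsupp a ha
  have hdeg := List.le_sum_of_mem (List.mem_map_of_mem (f := degx) ha)
  rw [← degx_graft] at hdeg
  simp only [F, Set.mem_iUnion]
  exact ⟨f, hf, degx a, Finset.mem_range.2 (by omega), hfa, rfl⟩

lemma bullet_coeff (fs : List (PSer K)) (S : PT) : (bullet fs).1 S = bulletCoeff fs S := by
  simp only [bullet, finite_support_bulletCoeff fs, implies_true, ↓reduceDIte]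

lemma onlyX_bullet {fs : List (PSer K)} (h : ∀ f ∈ fs, OnlyX f) : OnlyX (bullet fs) := by
  intro S hS
  rw [bullet_coeff] at hS
  obtain ⟨u, hu, hsupp⟩ := exists_decomp_of_bulletCoeff_ne_zero hS
  rw [← (mem_decomps.1 hu).2, degy_graft, List.sum_eq_zero_iff]
  simp only [List.mem_map]
  rintro _ ⟨a, ha, rfl⟩
  obtain ⟨f, hf, hfa⟩ := hsupp a ha
  exact h f hf a hfa

lemma bulletX_coe (fs : List (Kx K)) : (bulletX fs : PSer K) = bullet (fs.map Subtype.val) := by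
  unfold bulletX
  split_ifs with h
  · rfl
  · refine absurd (onlyX_bullet fun f hf => ?_) h
    obtain ⟨g, -, rfl⟩ := List.mem_map.1 hf
    exact g.2

lemma sum_decomps_map_relabel {M : Type*} [AddCommMonoid M] (σ : PVar → PVar) (m : ℕ) (T : PT)
    (φ : List PT → M) :
    ∑ u ∈ decomps m T, φ (u.map (Option.map (relabel σ))) =
      ∑ v ∈ decomps m (T.map (relabel σ)), φ v := by
  refine Finset.sum_nbij (fun u => u.map (Option.map (relabel σ))) (fun u hu => ?_)
    (fun u hu u' hu' h => ?_) (fun v hv => ?_) fun _ _ => rfl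
  · obtain ⟨hlen, hgraft⟩ := mem_decomps.1 hu
    exact mem_decomps.2 ⟨by simpa using hlen, by rw [graft_map_relabel, hgraft]⟩
  · have hgraft := (mem_decomps.1 hu).2.trans (mem_decomps.1 hu').2.symm
    refine eq_of_reduceOption_eq_of_map_eq (reduceOption_eq_of_graft_eq hgraft ?_) h
    simpa [List.reduceOption_map] using congrArg (fun v => v.reduceOption.length) h
  · obtain ⟨hlen, hgraft⟩ := mem_decomps.1 hv
    obtain ⟨u, rfl, hu⟩ := exists_graft_eq_of_graft_eq_map_relabel σ hgraft
    exact ⟨u, mem_decomps.2 ⟨by simpa using hlen, hu⟩, rfl⟩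

lemma exists_eq_pi_single_of_sum_eq_one {ι : Type*} [Fintype ι] [DecidableEq ι] {e : ι → ℕ}
    (h : ∑ j, e j = 1) : ∃ i, e = Pi.single i 1 := by
  obtain ⟨i, hi⟩ := (Finsupp.sum_eq_one_iff (Finsupp.equivFunOnFinite.symm e)).1 (by
    rwa [Finsupp.sum_fintype _ _ fun _ => rfl])
  exact ⟨i, by rw [← Finsupp.single_eq_pi_single, ← hi]; rfl⟩

lemma sum_prod_ite_eq_ite_sum_eq_one {ι R : Type*} [Fintype ι] [DecidableEq ι] [CommSemiring R]
    (e : ι → ℕ) (r : ι → R) :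
    ∑ i, ∏ j, (if j = i then (if e j = 1 then r j else 0) else if e j = 0 then r j else 0) =
      if ∑ j, e j = 1 then ∏ j, r j else 0 := by
  have hterm (i : ι) :
      ∏ j, (if j = i then (if e j = 1 then r j else 0) else if e j = 0 then r j else 0) =
        if e = Pi.single i 1 then ∏ j, r j else 0 := by
    split_ifs with h
    · subst h
      refine Finset.prod_congr rfl fun j _ => ?_
      by_cases hj : j = i <;> simp [hj]
    · obtain ⟨j, hj⟩ := Function.ne_iff.1 h
      refine Finset.prod_eq_zero (Finset.mem_univ j) ?_
      by_cases hji : j = i <;> simp_all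
  simp only [hterm]
  split_ifs with hsum
  · obtain ⟨i₀, rfl⟩ := exists_eq_pi_single_of_sum_eq_one hsum
    have hinj (i : ι) : Pi.single i₀ 1 = (Pi.single i 1 : ι → ℕ) ↔ i₀ = i :=
      ⟨fun h => by simpa [Pi.single_apply, eq_comm] using congrFun h i₀, fun h => h ▸ rfl⟩
    simp [hinj]
  · exact Finset.sum_eq_zero fun i _ => if_neg fun h => hsum (by simp [h])

lemma prod_zipWith_eq_prod_fin {α β M : Type*} [CommMonoid M] (g : α → β → M) {n : ℕ}
    {l : List α} {u : List β} (hl : l.length = n) (hu : u.length = n) :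
    (List.zipWith g l u).prod = ∏ j : Fin n, g (l[j.1]'(hl ▸ j.2)) (u[j.1]'(hu ▸ j.2)) := by
  rw [← List.prod_ofFn]
  congr 1
  apply List.ext_getElem <;> simp [hl, hu]

noncomputable def diff : PSer K →ₗ[K] PSer K where
  toFun f := ⟨fun S => if degy S = 1 then f.1 (S.map (relabel fun _ => .vx)) else 0, fun n =>
    (finite_setOf_degx_add_degy_le (n + 1)).subset fun S ⟨hS, hdeg⟩ => by
      have : degy S = 1 := by by_contra h; exact hS (if_neg h)
      simp only [Set.mem_ofPred_eq]
      omega⟩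
  map_add' f g := by
    ext S
    show ite _ _ _ = ite _ _ _ + ite _ _ _
    split_ifs <;> simp
  map_smul' a f := by
    ext S
    show ite _ _ _ = a * ite _ _ _
    split_ifs <;> simp

lemma diff_coeff (f : PSer K) (S : PT) :
    (diff f).1 S = if degy S = 1 then f.1 (S.map (relabel fun _ => .vx)) else 0 := rfl

lemma OnlyX.coeff_eq {f : PSer K} (hf : OnlyX f) (S : PT) :
    f.1 S = if degy S = 0 then f.1 (S.map (relabel fun _ => .vx)) else 0 := by
  split_ifs with h
  · rcases S with _ | t
    · rfl
    · rw [Option.map_some, relabel_vx_of_countLeaf_vy_eq_zero h]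
  · by_contra hS
    exact h (hf S hS)

lemma sum_prod_zipWith_set_diff {gs : List (PSer K)} (hgs : ∀ g ∈ gs, OnlyX g) {T : PT}
    {u : List PT} (hu : u ∈ decomps gs.length T) :
    ∑ i : Fin gs.length, (List.zipWith (fun f S => f.1 S) (gs.set i (diff gs[i])) u).prod =
      if degy T = 1 then
        (List.zipWith (fun f S => f.1 S) gs (u.map (Option.map (relabel fun _ => .vx)))).prod
      else 0 := by
  obtain ⟨hlen, rfl⟩ := mem_decomps.1 hu
  have hdegy : degy (graft u) = ∑ j : Fin gs.length, degy (u[j.1]'(by simp [hlen])) := by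
    rw [degy_graft, ← List.sum_ofFn]
    congr 1
    apply List.ext_getElem <;> simp [hlen]
  rw [hdegy, prod_zipWith_eq_prod_fin _ rfl (by simpa using hlen), ← sum_prod_ite_eq_ite_sum_eq_one]
  refine Finset.sum_congr rfl fun i _ => ?_
  rw [prod_zipWith_eq_prod_fin _ (by simp) hlen]
  refine Finset.prod_congr rfl fun j _ => ?_
  rw [List.getElem_set, List.getElem_map]
  by_cases hji : j = i
  · subst hji
    simp [diff_coeff]
  · rw [if_neg (fun h => hji (Fin.ext h.symm)), if_neg hji,
      ← (hgs _ (List.getElem_mem _)).coeff_eq]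

lemma diff_bullet {gs : List (PSer K)} (hgs : ∀ g ∈ gs, OnlyX g) :
    diff (bullet gs) = ∑ i : Fin gs.length, bullet (gs.set i (diff gs[i])) := by
  ext T
  rw [diff_coeff, bullet_coeff, bulletCoeff_eq_sum, ← sum_decomps_map_relabel, sum_coeff]
  simp only [bullet_coeff, bulletCoeff_eq_sum, List.length_set]
  rw [Finset.sum_comm, Finset.sum_congr rfl fun u hu => sum_prod_zipWith_set_diff hgs hu]
  split_ifs <;> simp

lemma diff_mem_orderGE {n : ℕ} {f : PSer K} (hf : f ∈ orderGE (n + 1)) :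
    diff f ∈ orderGE n := by
  intro S hS
  rw [diff_coeff] at hS
  split_ifs at hS with h
  · have := hf _ hS
    rcases S with _ | t
    · simp at h
    · simp only [Option.map_some, degx_some, countLeaf_vx_relabel_vx, degy_some] at this h ⊢
      omega
  · exact absurd rfl hS

lemma diff_Xps : diff (Xps : PSer K) = Yps := by
  ext S
  rw [diff_coeff, Xps, Yps, mono_coeff, mono_coeff]
  rcases S with _ | (v | ⟨t₁, t₂, ts⟩)
  · simp
  · cases v <;> simp [relabel]
  · simp [relabel]

theorem isUDeriv_diff : IsUDeriv fun f : Kx K => diff f.1 where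
  linear := (diff.comp (kxSub K).subtype).isLinear
  cont := contWrt_of_forall_exists_orderGE (diff.comp (kxSub K).subtype) fun n =>
    ⟨n + 1, fun _ hf => diff_mem_orderGE hf⟩
  map_X := diff_Xps
  leibniz fs _ := by
    have hfs : ∀ f ∈ fs.map Subtype.val, OnlyX f := fun f hf => by
      obtain ⟨g, -, rfl⟩ := List.mem_map.1 hf
      exact g.2
    rw [bulletX_coe, diff_bullet hfs]
    exact Fintype.sum_equiv (finCongr (List.length_map _)) _ _ fun i => by simp

lemma bullet_pair_onePS_right (g : PSer K) : bullet [g, onePS] = g := by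
  ext S
  rw [bullet_coeff, bulletCoeff_eq_sum]
  refine (Finset.sum_eq_single_of_mem [S, none]
      (mem_decomps.2 ⟨rfl, by rcases S with _ | t <;> rfl⟩) ?_).trans
    (by simp [onePS, mono_coeff])
  intro u hu hne
  obtain ⟨hlen, hgraft⟩ := mem_decomps.1 hu
  obtain ⟨a, b, rfl⟩ := List.length_eq_two.1 hlen
  rcases b with _ | b
  · exact absurd (by rw [← hgraft]; rcases a with _ | a <;> rfl) hne
  · simp [onePS, mono_coeff]

lemma bullet_pair_onePS_left (g : PSer K) : bullet [onePS, g] = g := by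
  ext S
  rw [bullet_coeff, bulletCoeff_eq_sum]
  refine (Finset.sum_eq_single_of_mem [none, S]
      (mem_decomps.2 ⟨rfl, by rcases S with _ | t <;> rfl⟩) ?_).trans
    (by simp [onePS, mono_coeff])
  intro u hu hne
  obtain ⟨hlen, hgraft⟩ := mem_decomps.1 hu
  obtain ⟨a, b, rfl⟩ := List.length_eq_two.1 hlen
  rcases a with _ | a
  · exact absurd (by rw [← hgraft]; rcases b with _ | b <;> rfl) hne
  · simp [onePS, mono_coeff]

lemma IsUDeriv.map_oneX {d : Kx K → PSer K} (hd : IsUDeriv d) : d oneX = 0 := by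
  have hone : bulletX [oneX, oneX] = (oneX : Kx K) :=
    Subtype.ext ((bulletX_coe _).trans (bullet_pair_onePS_right onePS))
  have hleibniz := hd.leibniz [oneX, oneX] le_rfl
  have hsum : ∀ F : Fin ([oneX, oneX] : List (Kx K)).length → PSer K, ∑ i, F i = F 0 + F 1 :=
    Fin.sum_univ_two
  rw [hone, hsum] at hleibniz
  change d oneX = bullet [d oneX, onePS] + bullet [onePS, d oneX] at hleibniz
  rwa [bullet_pair_onePS_right, bullet_pair_onePS_left, left_eq_add] at hleibniz

open Classical in
lemma prod_zipWith_map_mono_coeff :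
    ∀ (l u : List PT), u.length = l.length →
      (List.zipWith (fun f T => f.1 T) (l.map (mono (K := K))) u).prod = if u = l then 1 else 0
  | [], [], _ => by simp
  | S :: l, T :: u, h => by
    rw [List.map_cons, List.zipWith_cons_cons, List.prod_cons, mono_coeff,
      prod_zipWith_map_mono_coeff l u (by simpa using h)]
    by_cases hT : T = S <;> simp [hT]
  | [], _ :: _, h | _ :: _, [], h => by simp at h

lemma bullet_map_mono (l : List PT) : bullet (l.map (mono (K := K))) = mono (graft l) := by
  classical
  ext S
  rw [bullet_coeff, bulletCoeff_eq_sum, mono_coeff, Finset.sum_congr rfl fun u hu =>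
    prod_zipWith_map_mono_coeff l u (by simpa using (mem_decomps.1 hu).1)]
  simp [mem_decomps, eq_comm]

lemma mono_mem_kxSub {S : PT} (h : degy S = 0) : mono (K := K) S ∈ kxSub K := by
  intro T hT
  rw [mono_coeff] at hT
  split_ifs at hT with hTS
  exacts [hTS ▸ h, absurd rfl hT]

open Classical in
noncomputable def monoX (S : PT) : Kx K :=
  if h : degy S = 0 then ⟨mono S, mono_mem_kxSub h⟩ else 0

lemma coe_monoX {S : PT} (h : degy S = 0) : (monoX (K := K) S : PSer K) = mono S := by
  rw [monoX, dif_pos h]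

lemma countLeaf_vy_eq_zero_of_mem_children {t₁ t₂ : PTree} {ts : List PTree}
    (h : countLeaf .vy (.node t₁ t₂ ts) = 0) : ∀ c ∈ t₁ :: t₂ :: ts, countLeaf .vy c = 0 := by
  simp only [countLeaf_node, Nat.add_eq_zero_iff, List.sum_eq_zero_iff, List.mem_map] at h
  rintro c (_ | ⟨_, _ | ⟨_, hc⟩⟩)
  exacts [h.1.1, h.1.2, h.2 _ ⟨c, hc, rfl⟩]

lemma monoX_node {t₁ t₂ : PTree} {ts : List PTree} (h : countLeaf .vy (.node t₁ t₂ ts) = 0) :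
    monoX (K := K) (some (.node t₁ t₂ ts)) = bulletX ((t₁ :: t₂ :: ts).map (monoX ∘ some)) := by
  have hchildren : (t₁ :: t₂ :: ts).map (Subtype.val ∘ monoX (K := K) ∘ some) =
      ((t₁ :: t₂ :: ts).map some).map mono := by
    rw [List.map_map]
    exact List.map_congr_left fun c hc =>
      coe_monoX (S := some c) (countLeaf_vy_eq_zero_of_mem_children h c hc)
  apply Subtype.ext
  rw [coe_monoX (S := some _) h, bulletX_coe, List.map_map, hchildren, bullet_map_mono,
    graft_map_some]

lemma monoX_mem {E : Submodule K (Kx K)} (hone : oneX ∈ E) (hx : xX ∈ E)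
    (hbullet : ∀ fs : List (Kx K), 2 ≤ fs.length → (∀ f ∈ fs, f ∈ E) → bulletX fs ∈ E)
    (S : PT) : monoX S ∈ E := by
  by_cases hS : degy S = 0
  swap
  · rw [monoX, dif_neg hS]
    exact E.zero_mem
  rcases S with _ | t
  · exact (Subtype.ext (coe_monoX hS) : monoX (K := K) none = oneX) ▸ hone
  induction t using PTree.induction with
  | leaf v =>
    cases v
    · exact (Subtype.ext (coe_monoX hS) : monoX (K := K) (some (.leaf .vx)) = xX) ▸ hx
    · simp at hS
  | node t₁ t₂ ts h₁ h₂ hts =>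
    rw [monoX_node hS]
    refine hbullet _ (by simp) fun f hf => ?_
    obtain ⟨c, hc, rfl⟩ := List.mem_map.1 hf
    have hc0 := countLeaf_vy_eq_zero_of_mem_children hS c hc
    rcases List.mem_cons.1 hc with rfl | hc
    · exact h₁ hc0
    rcases List.mem_cons.1 hc with rfl | hc
    exacts [h₂ hc0, hts c hc hc0]

lemma eq_sum_monoX (f : Kx K) (hf : {S | f.1.1 S ≠ 0}.Finite) :
    f = ∑ S ∈ hf.toFinset, f.1.1 S • monoX S := by
  apply Subtype.ext
  rw [Submodule.coe_sum]
  refine (eq_sum_mono f.1 hf).trans (Finset.sum_congr rfl fun S hS => ?_)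
  rw [Submodule.coe_smul, coe_monoX (f.2 S (hf.mem_toFinset.1 hS))]

lemma sum_compX_coeff (f : Kx K) (n : ℕ) (S : PT) :
    ((∑ k ∈ Finset.range n, compX f k : Kx K) : PSer K).1 S =
      if degx S < n then f.1.1 S else 0 := by
  rw [Submodule.coe_sum, sum_coeff]
  simp [compX, comp, eq_comm (a := degx S)]

theorem Kx.submodule_eq_top {E : Submodule K (Kx K)} (hone : oneX ∈ E) (hx : xX ∈ E)
    (hbullet : ∀ fs : List (Kx K), 2 ≤ fs.length → (∀ f ∈ fs, f ∈ E) → bulletX fs ∈ E)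
    (hclosed : ∀ f : Kx K, (∀ n, ∃ g ∈ E, (g - f).1 ∈ orderGE n) → f ∈ E) : E = ⊤ := by
  have hpoly (f : Kx K) (hf : {S | f.1.1 S ≠ 0}.Finite) : f ∈ E :=
    eq_sum_monoX f hf ▸ E.sum_mem fun S _ => E.smul_mem _ (monoX_mem hone hx hbullet S)
  refine eq_top_iff.2 fun f _ => hclosed f fun n =>
    ⟨∑ k ∈ Finset.range n, compX f k, E.sum_mem fun k _ => ?_, fun S hS => ?_⟩
  · refine hpoly _ ((f.1.2 k).subset fun S hS => ?_)
    have hS' : (if degx S = k then f.1.1 S else 0) ≠ 0 := hS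
    split_ifs at hS' with hk
    exacts [⟨hS', hk⟩, absurd rfl hS']
  · rw [Submodule.coe_sub, sub_coeff, sum_compX_coeff] at hS
    by_contra hlt
    simp [Nat.lt_of_not_le hlt] at hS

theorem IsUDeriv.unique {d₁ d₂ : Kx K → PSer K} (h₁ : IsUDeriv d₁) (h₂ : IsUDeriv d₂) :
    d₁ = d₂ := by
  suffices
      LinearMap.eqLocus (IsLinearMap.mk' d₁ h₁.linear) (IsLinearMap.mk' d₂ h₂.linear) = ⊤ from
    funext (LinearMap.ext_iff.1 (LinearMap.eqLocus_eq_top.1 this))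
  refine Kx.submodule_eq_top ?_ ?_ (fun fs hfs hE => ?_) (fun f hf => ?_) <;>
    simp only [LinearMap.mem_eqLocus, IsLinearMap.mk'_apply] at *
  · rw [h₁.map_oneX, h₂.map_oneX]
  · rw [h₁.map_X, h₂.map_X]
  · rw [h₁.leibniz fs hfs, h₂.leibniz fs hfs]
    exact Finset.sum_congr rfl fun i _ => by rw [hE _ (List.get_mem fs i)]
  · refine sub_eq_zero.1 (eq_zero_of_forall_mem_orderGE fun n => ?_)
    obtain ⟨k₁, hk₁⟩ := h₁.cont.exists_orderGE f n
    obtain ⟨k₂, hk₂⟩ := h₂.cont.exists_orderGE f n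
    obtain ⟨g, hgE, hg⟩ := hf (max k₁ k₂)
    have hdiff := sub_mem (hk₂ g (orderGE_antitone (le_max_right _ _) hg))
      (hk₁ g (orderGE_antitone (le_max_left _ _) hg))
    rwa [hgE, sub_sub_sub_cancel_left] at hdiff

end Planar

open Planar in
/-- There exists a unique continuous `K`-linear map
`d : K{{x}} → K{{x,y}` with `d(x) = y` satisfying the Leibniz rule for every grafting
operation `•_m` (`m ≥ 2`): the universal derivation. -/
theorem planar_universal_derivation_exists_unique (K : Type) [Field K] :
    ∃! d : Kx K → PSer K, IsUDeriv d :=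
  ⟨_, isUDeriv_diff, fun _ hd => hd.unique isUDeriv_diff⟩
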